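/- arXiv:2305.16695 — 5 statements merged into one kernel-verified Lean document; each statement's English description precedes it below -/
import Mathlib

section
/- Let r̂^{a,b}_i(x) = a·ν_i(x) + b where ν_i is the relative relevance. Then r̂^{a,b} defines a valid probability distribution over the n publishers for every strategy profile (i.e., each r̂^{a,b}_i(x) ∈ [0,1] and they sum to 1), and is strictly increasing in ν_i, if and only if 0 < a ≤ 1/n and b = 1/n. -/
noncomputable def relRel (n : ℕ) (dstar : Fin n → ℝ) (i : Fin n) : ℝ :=
  (1 / ((n : ℝ) - 1)) * (∑ j ∈ Finset.univ.erase i, dstar j) - dstar i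

/-- r̂^{a,b}_i(x) = a·ν_i(x) + b. -/
noncomputable def linRank (n : ℕ) (a b : ℝ) (dstar : Fin n → ℝ) (i : Fin n) : ℝ :=
  a * relRel n dstar i + b

/-!
The relative relevances always sum to zero, so `∑ i, r̂ᵢ = n b` and the sum condition forces
`b = 1/n`. Each `νᵢ` ranges over `[-1, 1]`, and `νᵢ = -1` is attained by the profile in which
only publisher `i` is fully relevant; hence `r̂ᵢ ≥ 0` forces `a ≤ 1/n`. Conversely, for
`0 < a ≤ 1/n` every `r̂ᵢ` lies in `[0, 2/n] ⊆ [0, 1]`.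
-/

open Finset

lemma sum_relRel {n : ℕ} (hn : n ≠ 1) (dstar : Fin n → ℝ) : ∑ i, relRel n dstar i = 0 := by
  have hn' : (n : ℝ) - 1 ≠ 0 := sub_ne_zero.2 (by exact_mod_cast hn)
  simp only [relRel, sum_erase_eq_sub (mem_univ _), sum_sub_distrib, ← mul_sum, sum_const,
    card_univ, Fintype.card_fin, nsmul_eq_mul]
  field_simp
  ring

lemma sum_linRank {n : ℕ} (hn : n ≠ 1) (a b : ℝ) (dstar : Fin n → ℝ) :
    ∑ i, linRank n a b dstar i = n * b := by
  simp only [linRank, sum_add_distrib, ← mul_sum, sum_relRel hn, sum_const, card_univ,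
    Fintype.card_fin, nsmul_eq_mul, mul_zero, zero_add]

lemma relRel_mem_Icc {n : ℕ} {dstar : Fin n → ℝ} (hd : ∀ j, dstar j ∈ Set.Icc (0 : ℝ) 1)
    (i : Fin n) : relRel n dstar i ∈ Set.Icc (-1 : ℝ) 1 := by
  have hsum_nonneg : 0 ≤ ∑ j ∈ univ.erase i, dstar j := sum_nonneg fun j _ ↦ (hd j).1
  have hsum_le : ∑ j ∈ univ.erase i, dstar j ≤ (n : ℝ) - 1 := by
    calc ∑ j ∈ univ.erase i, dstar j ≤ ∑ _j ∈ univ.erase i, (1 : ℝ) :=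
          sum_le_sum fun j _ ↦ (hd j).2
      _ = (n : ℝ) - 1 := by
          rw [sum_const, card_erase_of_mem (mem_univ i), card_univ, Fintype.card_fin,
            nsmul_one, Nat.cast_pred (Fin.pos i)]
  have hn : 0 ≤ (n : ℝ) - 1 := sub_nonneg.2 (by exact_mod_cast Fin.pos i)
  have havg_nonneg : 0 ≤ 1 / ((n : ℝ) - 1) * ∑ j ∈ univ.erase i, dstar j :=
    mul_nonneg (one_div_nonneg.2 hn) hsum_nonneg
  have havg_le : 1 / ((n : ℝ) - 1) * ∑ j ∈ univ.erase i, dstar j ≤ 1 := by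
    rw [one_div_mul_eq_div]
    exact (div_le_div_of_nonneg_right hsum_le hn).trans (div_self_le_one _)
  obtain ⟨hdi₀, hdi₁⟩ := hd i
  simp only [relRel, Set.mem_Icc]
  constructor <;> linarith

lemma relRel_single_self {n : ℕ} (i : Fin n) : relRel n (Pi.single i 1) i = -1 := by
  rw [relRel, sum_eq_zero fun j hj ↦ Pi.single_eq_of_ne (ne_of_mem_erase hj) _]
  simp

lemma mul_add_mem_Icc_of_le {a c ν : ℝ} (hν : ν ∈ Set.Icc (-1 : ℝ) 1) (ha : 0 ≤ a) (hac : a ≤ c)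
    (hc : c ≤ 1 / 2) : a * ν + c ∈ Set.Icc (0 : ℝ) 1 := by
  obtain ⟨hν₁, hν₂⟩ := hν
  constructor <;> nlinarith

/-- r̂^{a,b} is a valid probability distribution for every profile and is strictly
increasing in ν_i (i.e. a > 0) iff 0 < a ≤ 1/n and b = 1/n. -/
theorem linRank_valid_iff (n : ℕ) (hn : 2 ≤ n) (a b : ℝ) :
    ((∀ dstar : Fin n → ℝ, (∀ i, dstar i ∈ Set.Icc (0 : ℝ) 1) →
        (∑ i, linRank n a b dstar i) = 1 ∧
        ∀ i, linRank n a b dstar i ∈ Set.Icc (0 : ℝ) 1) ∧ 0 < a)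
    ↔ (0 < a ∧ a ≤ 1 / (n : ℝ) ∧ b = 1 / (n : ℝ)) := by
  have hn1 : n ≠ 1 := by omega
  constructor
  · rintro ⟨hvalid, ha⟩
    have hb : b = 1 / n := eq_one_div_of_mul_eq_one_right <| by
      simpa [sum_linRank hn1] using (hvalid 0 fun _ ↦ by simp).1
    let i : Fin n := ⟨0, by omega⟩
    have hsingle := ((hvalid (Pi.single i 1) fun j ↦ ?_).2 i).1
    · rw [linRank, relRel_single_self, hb] at hsingle
      exact ⟨ha, by linarith, hb⟩
    · by_cases hj : j = i <;> simp [hj]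
  · rintro ⟨ha, hle, rfl⟩
    have hn_half : 1 / (n : ℝ) ≤ 1 / 2 := one_div_le_one_div_of_le two_pos (by exact_mod_cast hn)
    refine ⟨fun dstar hd ↦ ⟨?_, fun i ↦ ?_⟩, ha⟩
    · rw [sum_linRank hn1]
      field_simp
    · exact mul_add_mem_Icc_of_le (relRel_mem_Icc hd i) ha.le hle hn_half
end

section
/- There exists no slope a with 0 < a < 1/n and no constant α > 2 such that the linear RRP ranking function r̂^a (with intercept 1/n) is α-DIEC; equivalently, for every such a, the limit as n → ∞ of the extreme-profile ratio g_n(a) = ((a·n+1)(n−1))/(n(1−a)−1) is at most 2. -/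
open Filter Topology

/-- g_n(a) = ((a·n + 1)(n − 1)) / (n(1 − a) − 1), the extreme-profile ratio of
the linear RRP ranking function with slope a. -/
noncomputable def gfun (n : ℕ) (a : ℝ) : ℝ :=
  ((a * n + 1) * ((n : ℝ) - 1)) / ((n : ℝ) * (1 - a) - 1)

/-! With `a = c / n` the ratio is `g_n(c/n) = (c + 1) + c (c + 1) / (n - c - 1)`, which tends to
`c + 1 < 2`; a sequence has only one limit, so it cannot tend to any `α > 2`. -/

theorem gfun_div_natCast {n : ℕ} {c : ℝ} (hn : (n : ℝ) ≠ 0) (hnc : (n : ℝ) - c - 1 ≠ 0) :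
    gfun n (c / n) = c + 1 + (c + 1) * c / ((n : ℝ) - c - 1) := by
  have hden : (n : ℝ) * (1 - c / n) - 1 = (n : ℝ) - c - 1 := by field_simp
  rw [gfun, hden]
  field_simp
  ring

theorem tendsto_gfun_div_natCast (c : ℝ) :
    Tendsto (fun n : ℕ => gfun n (c / n)) atTop (𝓝 (c + 1)) := by
  have hden : Tendsto (fun n : ℕ => (n : ℝ) - c - 1) atTop atTop :=
    (tendsto_atTop_add_const_right _ (-(c + 1)) tendsto_natCast_atTop_atTop).congr
      fun n => by ring
  have hlim : Tendsto (fun n : ℕ => c + 1 + (c + 1) * c / ((n : ℝ) - c - 1)) atTop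
      (𝓝 (c + 1)) := by
    simpa using tendsto_const_nhds.add (tendsto_const_nhds.div_atTop hden)
  refine hlim.congr' ?_
  filter_upwards [hden.eventually_gt_atTop 0, eventually_gt_atTop 0] with n hnc hn
  exact (gfun_div_natCast (by positivity) hnc.ne').symm

theorem no_linRank_DIEC_above_two_general (c : ℝ) (hc1 : c < 1) :
    Tendsto (fun n : ℕ => gfun n (c / n)) atTop (nhds (c + 1)) ∧
    c + 1 ≤ 2 ∧
    ∀ α : ℝ, 2 < α → ¬ Tendsto (fun n : ℕ => gfun n (c / n)) atTop (nhds α) := by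
  refine ⟨tendsto_gfun_div_natCast c, by linarith, fun α hα hα_lim => ?_⟩
  have := tendsto_nhds_unique (tendsto_gfun_div_natCast c) hα_lim
  linarith

/-- For every slope family a = c/n with 0 < c < 1 (i.e. 0 < a < 1/n), the
extreme-profile ratio g_n(c/n) tends to c + 1 ≤ 2; in particular it does not
tend to any α > 2, so no such r̂^a is α-DIEC with α > 2. -/
theorem no_linRank_DIEC_above_two (c : ℝ) (hc0 : 0 < c) (hc1 : c < 1) :
    Tendsto (fun n : ℕ => gfun n (c / n)) atTop (nhds (c + 1)) ∧
    c + 1 ≤ 2 ∧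
    ∀ α : ℝ, 2 < α → ¬ Tendsto (fun n : ℕ => gfun n (c / n)) atTop (nhds α) :=
  no_linRank_DIEC_above_two_general c hc1
end

section
/- The two-player one-dimensional publishers game with the PRP ranking function, λ > 1/2, distance d(x,y) = |x−y|, initial documents x_0^1 = x_0^2 = 0 and information need x* = 1, has no pure Nash equilibrium: for every strategy profile (x_1, x_2) ∈ [0,1]², some player has a strictly profitable deviation. -/
noncomputable section

/-- Probability that a player at position `xi` is ranked first against an
opponent at `xj`, under PRP with information need x* = 1. -/
def prp (xi xj : ℝ) : ℝ :=
  if |xi - 1| < |xj - 1| then 1 else if |xi - 1| = |xj - 1| then 1 / 2 else 0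

/-- Utility of a player at `xi` against `xj`: ranking probability minus λ·|xi − 0|. -/
def uPRP (lam xi xj : ℝ) : ℝ := prp xi xj - lam * xi

/-!
Whoever is strictly closer to x* = 1 wins outright, and can move halfway back towards the
opponent: still winning, at lower cost. At a tie below 1, a small step up turns the share 1/2
into 1 for a cost below 1/2. A tie at 1 yields 1/2 − λ < 0, so retreating to 0 is better.
-/

def HasProfitableDeviation (lam xi xj : ℝ) : Prop :=
  ∃ y ∈ Set.Icc (0 : ℝ) 1, uPRP lam xi xj < uPRP lam y xj

lemma prp_self (x : ℝ) : prp x x = 1 / 2 := by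
  simp [prp]

lemma prp_eq_one_of_lt {a b : ℝ} (hab : a < b) (hb : b ≤ 1) : prp b a = 1 := by
  rw [prp, abs_of_nonpos (by linarith), abs_of_nonpos (by linarith), if_pos (by linarith)]

lemma prp_eq_zero_of_lt {a b : ℝ} (hab : a < b) (hb : b ≤ 1) : prp a b = 0 := by
  rw [prp, abs_of_nonpos (by linarith), abs_of_nonpos (by linarith),
    if_neg (by linarith), if_neg (by linarith)]

lemma hasProfitableDeviation_of_lt {lam a b : ℝ} (hlam : 0 < lam) (ha : 0 ≤ a) (hab : a < b)
    (hb : b ≤ 1) : HasProfitableDeviation lam b a := by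
  refine ⟨(a + b) / 2, ⟨by linarith, by linarith⟩, ?_⟩
  rw [uPRP, uPRP, prp_eq_one_of_lt hab hb, prp_eq_one_of_lt (by linarith) (by linarith)]
  nlinarith

lemma hasProfitableDeviation_self_of_lt_one {lam x : ℝ} (hlam : 0 ≤ lam) (hx₀ : 0 ≤ x)
    (hx₁ : x < 1) : HasProfitableDeviation lam x x := by
  have hd : 0 < 1 + 2 * lam := by linarith
  set y := x + (1 - x) / (1 + 2 * lam)
  have hstep : 0 < (1 - x) / (1 + 2 * lam) := div_pos (by linarith) hd
  have hstep_le : (1 - x) / (1 + 2 * lam) ≤ 1 - x := div_le_self (by linarith) (by linarith)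
  have hcost : lam * ((1 - x) / (1 + 2 * lam)) < 1 / 2 := by
    rw [mul_div_assoc', div_lt_iff₀ hd]
    nlinarith
  refine ⟨y, ⟨by linarith, by linarith⟩, ?_⟩
  rw [uPRP, uPRP, prp_self, prp_eq_one_of_lt (by linarith) (by linarith)]
  linarith

lemma hasProfitableDeviation_one_one {lam : ℝ} (hlam : 1 / 2 < lam) :
    HasProfitableDeviation lam 1 1 := by
  refine ⟨0, ⟨le_rfl, zero_le_one⟩, ?_⟩
  rw [uPRP, uPRP, prp_self, prp_eq_zero_of_lt zero_lt_one le_rfl]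
  linarith

lemma hasProfitableDeviation_self {lam x : ℝ} (hlam : 1 / 2 < lam) (hx : x ∈ Set.Icc (0 : ℝ) 1) :
    HasProfitableDeviation lam x x := by
  rcases hx.2.eq_or_lt with rfl | hx₁
  · exact hasProfitableDeviation_one_one hlam
  · exact hasProfitableDeviation_self_of_lt_one (by linarith) hx.1 hx₁

/-- The two-player PRP publishers game with λ > 1/2, x_0^1 = x_0^2 = 0 and
x* = 1 has no pure Nash equilibrium. -/
theorem prp_no_pure_nash (lam : ℝ) (hlam : 1 / 2 < lam)
    (x₁ x₂ : ℝ) (h₁ : x₁ ∈ Set.Icc (0 : ℝ) 1) (h₂ : x₂ ∈ Set.Icc (0 : ℝ) 1) :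
    (∃ y ∈ Set.Icc (0 : ℝ) 1, uPRP lam x₁ x₂ < uPRP lam y x₂) ∨
    (∃ y ∈ Set.Icc (0 : ℝ) 1, uPRP lam x₂ x₁ < uPRP lam y x₁) := by
  have hlam₀ : 0 < lam := by linarith
  rcases lt_trichotomy x₁ x₂ with h | rfl | h
  · exact Or.inr (hasProfitableDeviation_of_lt hlam₀ h₁.1 h h₂.2)
  · exact Or.inl (hasProfitableDeviation_self hlam h₁)
  · exact Or.inl (hasProfitableDeviation_of_lt hlam₀ h₂.1 h h₁.2)

end
end

section
/- In the two-player PRP publishers game with λ > 1/2, no profile with x_1 ≠ x_2 is a pure Nash equilibrium: WLOG if x_1 < x_2, the losing player 1 has utility −λ x_1 and profits by moving to 0 unless x_1 = 0; and if x_1 = 0, the winning player 2 has utility 1 − λ x_2 with x_2 > 0 and strictly profits by moving to x_2/2 (still winning, at lower cost). -/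
noncomputable section

/-! Neither deviation changes who is ranked first; each only lowers the cost `λ x`, which is a
strict gain since `λ > 0`. -/

theorem abs_sub_one_lt_abs_sub_one {x y : ℝ} (hxy : x < y) (hy : y ≤ 1) :
    |y - 1| < |x - 1| := by
  rw [abs_of_nonpos (by linarith), abs_of_neg (by linarith)]
  linarith

theorem prp_nonneg (xi xj : ℝ) : 0 ≤ prp xi xj := by
  unfold prp
  split_ifs <;> norm_num

theorem prp_eq_zero_of_lt_s12 {xi xj : ℝ} (hij : xi < xj) (hj : xj ≤ 1) : prp xi xj = 0 := by
  have hfar := abs_sub_one_lt_abs_sub_one hij hj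
  rw [prp, if_neg hfar.not_gt, if_neg hfar.ne']

theorem prp_eq_one_of_lt_s12 {xi xj : ℝ} (hji : xj < xi) (hi : xi ≤ 1) : prp xi xj = 1 :=
  if_pos (abs_sub_one_lt_abs_sub_one hji hi)

theorem uPRP_eq_of_lt {xi xj : ℝ} (lam : ℝ) (hij : xi < xj) (hj : xj ≤ 1) :
    uPRP lam xi xj = -(lam * xi) := by
  rw [uPRP, prp_eq_zero_of_lt_s12 hij hj, zero_sub]

theorem uPRP_eq_of_gt {xi xj : ℝ} (lam : ℝ) (hji : xj < xi) (hi : xi ≤ 1) :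
    uPRP lam xi xj = 1 - lam * xi := by
  rw [uPRP, prp_eq_one_of_lt_s12 hji hi]

theorem prp_no_offdiagonal_nash_general (lam : ℝ) (hlam : 1 / 2 < lam)
    (x₁ x₂ : ℝ) (h₂ : x₂ ∈ Set.Icc (0 : ℝ) 1)
    (hlt : x₁ < x₂) :
    uPRP lam x₁ x₂ = -(lam * x₁) ∧
    (0 < x₁ → uPRP lam x₁ x₂ < uPRP lam 0 x₂) ∧
    (x₁ = 0 →
      uPRP lam x₂ x₁ = 1 - lam * x₂ ∧ 0 < x₂ ∧
      uPRP lam x₂ x₁ < uPRP lam (x₂ / 2) x₁) := by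
  have hlam₀ : 0 < lam := by linarith
  have hlose := uPRP_eq_of_lt lam hlt h₂.2
  refine ⟨hlose, fun hx₁ => ?_, fun hx₁ => ?_⟩
  · have hcost := mul_pos hlam₀ hx₁
    rw [hlose, uPRP, mul_zero, sub_zero]
    linarith [prp_nonneg 0 x₂]
  · subst hx₁
    have hwin := uPRP_eq_of_gt lam hlt h₂.2
    have hwin_half := uPRP_eq_of_gt lam (half_pos hlt) (by linarith [h₂.2])
    refine ⟨hwin, hlt, ?_⟩
    have hcost := mul_pos hlam₀ hlt
    rw [hwin, hwin_half]
    linarith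

/-- In the two-player PRP game with λ > 1/2, no profile with x₁ < x₂ is a pure
Nash equilibrium: the losing player 1 has utility −λx₁ and profits by moving
to 0 unless x₁ = 0; and if x₁ = 0, the winning player 2 has utility 1 − λx₂
and strictly profits by moving to x₂/2. -/
theorem prp_no_offdiagonal_nash (lam : ℝ) (hlam : 1 / 2 < lam)
    (x₁ x₂ : ℝ) (h₁ : x₁ ∈ Set.Icc (0 : ℝ) 1) (h₂ : x₂ ∈ Set.Icc (0 : ℝ) 1)
    (hlt : x₁ < x₂) :
    uPRP lam x₁ x₂ = -(lam * x₁) ∧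
    (0 < x₁ → uPRP lam x₁ x₂ < uPRP lam 0 x₂) ∧
    (x₁ = 0 →
      uPRP lam x₂ x₁ = 1 - lam * x₂ ∧ 0 < x₂ ∧
      uPRP lam x₂ x₁ < uPRP lam (x₂ / 2) x₁) :=
  prp_no_offdiagonal_nash_general lam hlam x₁ x₂ h₂ hlt
end
end

section
/- Every exact potential game with finite strategy sets possesses at least one pure Nash equilibrium, namely any maximizer of the potential function φ. -/
/-! A unilateral deviation changes the deviating player's utility by exactly the change of the
potential, so at a maximizer of φ no deviation is profitable; on the finite profile space φ
attains its maximum. -/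

open Function

namespace PotentialGame

variable {ι : Type*} [DecidableEq ι] {A : ι → Type*}

def IsExactPotential (u : ι → (∀ i, A i) → ℝ) (φ : (∀ i, A i) → ℝ) : Prop :=
  ∀ (i : ι) (a : ∀ i, A i) (a' a'' : A i),
    φ (update a i a') - φ (update a i a'') = u i (update a i a') - u i (update a i a'')

def IsPureNashEquilibrium (u : ι → (∀ i, A i) → ℝ) (a : ∀ i, A i) : Prop :=
  ∀ (i : ι) (a' : A i), u i (update a i a') ≤ u i a

variable {u : ι → (∀ i, A i) → ℝ} {φ : (∀ i, A i) → ℝ}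

theorem IsExactPotential.utility_deviation_eq (hφ : IsExactPotential u φ) (a : ∀ i, A i)
    (i : ι) (a' : A i) :
    u i (update a i a') - u i a = φ (update a i a') - φ a := by
  simpa only [update_eq_self] using (hφ i a a' (a i)).symm

theorem IsExactPotential.isPureNashEquilibrium_of_isMax (hφ : IsExactPotential u φ)
    {a : ∀ i, A i} (hmax : ∀ b, φ b ≤ φ a) : IsPureNashEquilibrium u a := fun i a' => by
  have := hφ.utility_deviation_eq a i a'
  linarith [hmax (update a i a')]

theorem IsExactPotential.exists_isPureNashEquilibrium [Finite (∀ i, A i)] [Nonempty (∀ i, A i)]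
    (hφ : IsExactPotential u φ) : ∃ a, IsPureNashEquilibrium u a :=
  let ⟨a, ha⟩ := Finite.exists_max φ
  ⟨a, hφ.isPureNashEquilibrium_of_isMax ha⟩

end PotentialGame

/-- Every finite exact potential game has a pure Nash equilibrium, namely any
maximizer of the potential φ. -/
theorem potential_game_pure_nash
    (ι : Type*) [Fintype ι] [DecidableEq ι] (A : ι → Type*) [∀ i, Fintype (A i)]
    [∀ i, Nonempty (A i)]
    (u : ι → (∀ i, A i) → ℝ) (φ : (∀ i, A i) → ℝ)
    (hpot : ∀ (i : ι) (a : ∀ i, A i) (a' a'' : A i),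
      φ (Function.update a i a') - φ (Function.update a i a'') =
        u i (Function.update a i a') - u i (Function.update a i a'')) :
    (∀ a : ∀ i, A i, (∀ b, φ b ≤ φ a) →
      ∀ (i : ι) (a' : A i), u i (Function.update a i a') ≤ u i a) ∧
    ∃ a : ∀ i, A i, ∀ (i : ι) (a' : A i), u i (Function.update a i a') ≤ u i a :=
  have hφ : PotentialGame.IsExactPotential u φ := hpot
  ⟨fun _ => hφ.isPureNashEquilibrium_of_isMax, hφ.exists_isPureNashEquilibrium⟩
end
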